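/- Let L₁ and L₂ be two dual-Lip-norms on the same von Neumann algebra M, and J a seminorm on M ⊕ M restricting to L₁ on M⊕{0} and L₂ on {0}⊕M. Then dist_{qGH*}((M, L₁), (M, L₂)) ≤ sup{ J(x, −x) : x ∈ M, ‖x‖ = 1 }. -/

import Mathlib

/-!
Pair each `a` in the positive unit ball of `M₂(M)` with itself: `embL a - embR a` has entries
`(aᵢⱼ, -aᵢⱼ)`. Since `0 ≤ a ≤ 1` in the C⋆-algebra `M₂(M)`, `‖a‖ ≤ 1` and hence `‖aᵢⱼ‖ ≤ 1`, so by
homogeneity of `J` each entry has `J`-value at most `sup_{‖x‖ = 1} J (x, -x)`. That supremum is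
finite (an unbounded `sSup` would be `0`) because `J (x, -x) ≤ L₁ x + L₂ (-x)`, and a dual-Lip-norm,
being continuous for its own ball topology, is bounded on the compact unit ball.
-/

open Filter Topology

/-- The topology induced by a (semi)norm-like function `L`: the topology generated by the
open balls of the translation-invariant (pseudo)metric `d(x,y) = L (x - y)`. -/
def ballTopology {E : Type*} [AddGroup E] (L : E → ℝ) : TopologicalSpace E :=
  TopologicalSpace.generateFrom {s | ∃ c r, s = {x | L (x - c) < r}}

/-- A dual-Lip-norm on (the underlying space of) a von Neumann algebra `M`: a norm making the
unit ball of `M` compact in the induced topology (equivalently, inducing the weak* topology on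
bounded subsets). -/
def IsDualLipNorm {M : Type*} [NormedRing M] [NormedAlgebra ℂ M] (L : M → ℝ) : Prop :=
  (∀ x, 0 ≤ L x) ∧ (∀ x y, L (x + y) ≤ L x + L y) ∧
    (∀ (c : ℂ) (x : M), L (c • x) = ‖c‖ * L x) ∧ (∀ x, L x = 0 → x = 0) ∧
    @IsCompact M (ballTopology L) {x | ‖x‖ ≤ 1}

/-- Positivity in a `*`-ring: `a` is positive iff it is of the form `b* b`. -/
def IsPos {A : Type*} [Ring A] [StarRing A] (a : A) : Prop := ∃ b, a = star b * b

/-- The positive part `X_M` of the unit ball of the 2×2 matrices over `A`: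
the elements `a` with `0 ≤ a ≤ 1`. -/
def posUnitBall (A : Type*) [Ring A] [StarRing A] : Set (Matrix (Fin 2) (Fin 2) A) :=
  {a | IsPos a ∧ IsPos (1 - a)}

/-- The unit ball of the 2×2 matrices over a unital C*-algebra `A`, characterized
algebraically: `‖a‖ ≤ 1` iff `1 - a* a ≥ 0`. -/
def matUnitBall (A : Type*) [Ring A] [StarRing A] : Set (Matrix (Fin 2) (Fin 2) A) :=
  {a | IsPos (1 - star a * a)}

/-- The lift of a (semi)norm to 2×2 matrices: the max over the entries. -/
noncomputable def matLift {A : Type*} (L : A → ℝ) (a : Matrix (Fin 2) (Fin 2) A) : ℝ :=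
  max (max (L (a 0 0)) (L (a 0 1))) (max (L (a 1 0)) (L (a 1 1)))

/-- The Hausdorff distance between two subsets w.r.t. a seminorm `L`. -/
noncomputable def seminormHausdorffDist {Z : Type*} [AddGroup Z] (L : Z → ℝ)
    (A B : Set Z) : ℝ :=
  max (⨆ x : A, ⨅ y : B, L ((x : Z) - (y : Z))) (⨆ y : B, ⨅ x : A, L ((x : Z) - (y : Z)))

/-- The set `𝓛(M,N)` of admissible seminorms on `M ⊕ N`, i.e. seminorms restricting to `LM` on
`M ⊕ {0}` and to `LN` on `{0} ⊕ N`. -/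
def admissible {M N : Type*} [Ring M] [Algebra ℂ M] [Ring N] [Algebra ℂ N]
    (LM : M → ℝ) (LN : N → ℝ) : Set (M × N → ℝ) :=
  {L | (∀ z, 0 ≤ L z) ∧ (∀ z w, L (z + w) ≤ L z + L w) ∧
    (∀ (c : ℂ) (z : M × N), L (c • z) = ‖c‖ * L z) ∧
    (∀ x : M, L (x, 0) = LM x) ∧ (∀ y : N, L (0, y) = LN y)}

/-- The entrywise embedding of `M₂(M)` into `M₂(M ⊕ N)`. -/
def embL {M N : Type*} [Zero N] (a : Matrix (Fin 2) (Fin 2) M) :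
    Matrix (Fin 2) (Fin 2) (M × N) := a.map fun x => (x, 0)

/-- The entrywise embedding of `M₂(N)` into `M₂(M ⊕ N)`. -/
def embR {M N : Type*} [Zero M] (b : Matrix (Fin 2) (Fin 2) N) :
    Matrix (Fin 2) (Fin 2) (M × N) := b.map fun y => ((0 : M), y)

/-- The dual quantum Gromov–Hausdorff distance between `(M, LM)` and `(N, LN)`: the infimum,
over admissible seminorms `L` on `M ⊕ N`, of the Hausdorff distance w.r.t. the lift of `L` to
2×2 matrices between the positive parts of the unit balls of `M₂(M)` and `M₂(N)`. -/
noncomputable def distqGH {M N : Type*} [NormedRing M] [NormedAlgebra ℂ M] [StarRing M]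
    [NormedRing N] [NormedAlgebra ℂ N] [StarRing N] (LM : M → ℝ) (LN : N → ℝ) : ℝ :=
  sInf {d | ∃ L ∈ admissible LM LN,
    d = seminormHausdorffDist (matLift L)
      (embL (N := N) '' posUnitBall M) (embR (M := M) '' posUnitBall N)}

/-- The radius of a Lip-von Neumann algebra: the sup of the Lip-norm over the unit ball. -/
noncomputable def lipRadius {M : Type*} [NormedRing M] (L : M → ℝ) : ℝ :=
  sSup {r | ∃ x : M, ‖x‖ ≤ 1 ∧ r = L x}

lemma continuous_ballTopology {E : Type*} [AddGroup E] {L : E → ℝ} (h_zero : L 0 = 0)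
    (h_add : ∀ x y, L (x + y) ≤ L x + L y) (h_neg : ∀ x, L (-x) = L x) :
    Continuous[ballTopology L, inferInstance] L := by
  let _ := ballTopology L
  refine Metric.continuous_iff'.2 fun x ε hε => ?_
  have hball : IsOpen {y | L (y - x) < ε} :=
    TopologicalSpace.GenerateOpen.basic _ ⟨x, ε, rfl⟩
  filter_upwards [hball.mem_nhds (by simpa [h_zero] using hε)] with y (hy : L (y - x) < ε)
  have hy_le := h_add (y - x) x
  have hx_le := h_add (-(y - x)) y
  rw [sub_add_cancel] at hy_le
  rw [h_neg, neg_sub, sub_add_cancel] at hx_le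
  rw [Real.dist_eq, abs_sub_lt_iff]
  exact ⟨by linarith, by linarith⟩

lemma IsDualLipNorm.bddAbove_image_unitBall {M : Type*} [NormedRing M] [NormedAlgebra ℂ M]
    {L : M → ℝ} (hL : IsDualLipNorm L) : BddAbove (L '' {x | ‖x‖ ≤ 1}) := by
  obtain ⟨-, h_add, h_smul, -, h_compact⟩ := hL
  have h_cont : Continuous[ballTopology L, inferInstance] L :=
    continuous_ballTopology (by simpa using h_smul 0 0) h_add
      (fun x => by simpa using h_smul (-1) x)
  let _ := ballTopology L
  exact h_compact.bddAbove_image h_cont.continuousOn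

lemma le_sSup_of_norm_le_one {𝕜 E : Type*} [RCLike 𝕜] [NormedAddCommGroup E]
    [NormedSpace 𝕜 E] {f : E → ℝ} (hf_nonneg : ∀ x, 0 ≤ f x)
    (hf_smul : ∀ (c : 𝕜) x, f (c • x) = ‖c‖ * f x)
    (hf_bdd : BddAbove {r | ∃ x : E, ‖x‖ = 1 ∧ r = f x}) {z : E} (hz : ‖z‖ ≤ 1) :
    f z ≤ sSup {r | ∃ x : E, ‖x‖ = 1 ∧ r = f x} := by
  rcases eq_or_ne z 0 with rfl | hz₀
  · have h_zero : f 0 = 0 := by simpa using hf_smul 0 0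
    exact h_zero ▸ Real.sSup_nonneg (by rintro r ⟨x, -, rfl⟩; exact hf_nonneg x)
  set x : E := (‖z‖⁻¹ : 𝕜) • z
  have hzx : z = (‖z‖ : 𝕜) • x := by
    rw [smul_smul, mul_inv_cancel₀ (RCLike.ofReal_ne_zero.2 (norm_ne_zero_iff.2 hz₀)), one_smul]
  calc f z = ‖z‖ * f x := by rw [hzx, hf_smul, RCLike.norm_ofReal, abs_norm, ← hzx]
    _ ≤ f x := mul_le_of_le_one_left (hf_nonneg x) hz
    _ ≤ _ := le_csSup hf_bdd ⟨x, norm_smul_inv_norm hz₀, rfl⟩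

lemma bddAbove_setOf_apply_neg {M : Type*} [NormedRing M] [NormedAlgebra ℂ M]
    {L₁ L₂ : M → ℝ} (h₁ : IsDualLipNorm L₁) (h₂ : IsDualLipNorm L₂) {J : M × M → ℝ}
    (hJ : J ∈ admissible L₁ L₂) : BddAbove {r | ∃ x : M, ‖x‖ = 1 ∧ r = J (x, -x)} := by
  obtain ⟨-, hJ_add, -, hJ₁, hJ₂⟩ := hJ
  obtain ⟨C₁, hC₁⟩ := h₁.bddAbove_image_unitBall
  obtain ⟨C₂, hC₂⟩ := h₂.bddAbove_image_unitBall
  refine ⟨C₁ + C₂, ?_⟩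
  rintro r ⟨x, hx, rfl⟩
  calc J (x, -x) = J ((x, 0) + (0, -x)) := by simp
    _ ≤ L₁ x + L₂ (-x) := by rw [← hJ₁, ← hJ₂]; exact hJ_add _ _
    _ ≤ C₁ + C₂ := add_le_add (hC₁ ⟨x, hx.le, rfl⟩) (hC₂ ⟨-x, by simpa using hx.le, rfl⟩)

lemma IsPos.nonneg {A : Type*} [Ring A] [StarRing A] [PartialOrder A]
    [StarOrderedRing A] {a : A} (ha : IsPos a) : 0 ≤ a := by
  obtain ⟨b, rfl⟩ := ha
  exact star_mul_self_nonneg b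

lemma norm_le_one_of_isPos_of_isPos_one_sub {A : Type*} [CStarAlgebra A] [PartialOrder A]
    [StarOrderedRing A] {a : A} (ha : IsPos a) (ha' : IsPos (1 - a)) : ‖a‖ ≤ 1 :=
  (CStarAlgebra.norm_le_one_iff_of_nonneg a ha.nonneg).2 (sub_nonneg.1 ha'.nonneg)

lemma IsPos.map {F A B : Type*} [Ring A] [StarRing A] [Ring B] [StarRing B]
    [FunLike F A B] [RingHomClass F A B] [StarHomClass F A B] (f : F) {a : A} (ha : IsPos a) :
    IsPos (f a) := by
  obtain ⟨b, rfl⟩ := ha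
  exact ⟨f b, by rw [map_mul, map_star]⟩

lemma norm_apply_le_one_of_mem_posUnitBall {A : Type*} [CStarAlgebra A] [PartialOrder A]
    [StarOrderedRing A] {a : Matrix (Fin 2) (Fin 2) A} (ha : a ∈ posUnitBall A) (i j : Fin 2) :
    ‖a i j‖ ≤ 1 := by
  let e := CStarMatrix.ofMatrixStarAlgEquiv (n := Fin 2) (A := A)
  have h_norm : ‖e a‖ ≤ 1 :=
    norm_le_one_of_isPos_of_isPos_one_sub (ha.1.map e) (by simpa using ha.2.map e)
  exact CStarMatrix.norm_entry_le_norm.trans h_norm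

lemma matLift_nonneg {A : Type*} {L : A → ℝ} (hL : ∀ x, 0 ≤ L x)
    (a : Matrix (Fin 2) (Fin 2) A) : 0 ≤ matLift L a :=
  le_max_of_le_left (le_max_of_le_left (hL _))

lemma matLift_le {A : Type*} {L : A → ℝ} {a : Matrix (Fin 2) (Fin 2) A} {r : ℝ}
    (h : ∀ i j, L (a i j) ≤ r) : matLift L a ≤ r :=
  max_le (max_le (h 0 0) (h 0 1)) (max_le (h 1 0) (h 1 1))

lemma seminormHausdorffDist_nonneg {Z : Type*} [AddGroup Z] {L : Z → ℝ} (hL : ∀ z, 0 ≤ L z)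
    (A B : Set Z) : 0 ≤ seminormHausdorffDist L A B :=
  le_max_of_le_left (Real.iSup_nonneg fun _ => Real.iInf_nonneg fun _ => hL _)

lemma seminormHausdorffDist_image_le {X Z : Type*} [AddGroup Z] {L : Z → ℝ}
    (hL : ∀ z, 0 ≤ L z) {f g : X → Z} {s : Set X} {r : ℝ} (hr : 0 ≤ r)
    (hfg : ∀ x ∈ s, L (f x - g x) ≤ r) : seminormHausdorffDist L (f '' s) (g '' s) ≤ r := by
  have h_bdd : ∀ (t : Set Z) (F : t → Z), BddBelow (Set.range fun y => L (F y)) :=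
    fun _ _ => ⟨0, by rintro _ ⟨y, rfl⟩; exact hL _⟩
  refine max_le (Real.iSup_le ?_ hr) (Real.iSup_le ?_ hr)
  · rintro ⟨_, x, hx, rfl⟩
    exact (ciInf_le (h_bdd _ _) (⟨g x, x, hx, rfl⟩ : g '' s)).trans (hfg x hx)
  · rintro ⟨_, x, hx, rfl⟩
    exact (ciInf_le (h_bdd _ _) (⟨f x, x, hx, rfl⟩ : f '' s)).trans (hfg x hx)

lemma distqGH_le_of_mem_admissible {M N : Type*} [NormedRing M] [NormedAlgebra ℂ M]
    [StarRing M] [NormedRing N] [NormedAlgebra ℂ N] [StarRing N] {LM : M → ℝ} {LN : N → ℝ}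
    {L : M × N → ℝ} (hL : L ∈ admissible LM LN) :
    distqGH LM LN ≤ seminormHausdorffDist (matLift L)
      (embL (N := N) '' posUnitBall M) (embR (M := M) '' posUnitBall N) := by
  refine csInf_le ⟨0, ?_⟩ ⟨L, hL, rfl⟩
  rintro _ ⟨L', hL', rfl⟩
  exact seminormHausdorffDist_nonneg (matLift_nonneg hL'.1) _ _

lemma embL_sub_embR_apply {M : Type*} [AddGroup M] (a : Matrix (Fin 2) (Fin 2) M)
    (i j : Fin 2) : (embL (N := M) a - embR (M := M) a) i j = (a i j, -a i j) := by
  simp [embL, embR]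

/-- Let `L₁`, `L₂` be dual-Lip-norms on the same von Neumann algebra `M`,
and `J` an admissible seminorm on `M ⊕ M` restricting to `L₁` and `L₂`. Then
`dist_{qGH*}((M,L₁),(M,L₂)) ≤ sup { J(x,−x) : ‖x‖ = 1 }`. -/
theorem stmt13 {M : Type*}
    [NormedRing M] [NormedAlgebra ℂ M] [StarRing M] [CStarRing M] [StarModule ℂ M]
    [CompleteSpace M]
    (L₁ L₂ : M → ℝ) (h₁ : IsDualLipNorm L₁) (h₂ : IsDualLipNorm L₂)
    (J : M × M → ℝ) (hJ : J ∈ admissible L₁ L₂) :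
    distqGH L₁ L₂ ≤ sSup {r | ∃ x : M, ‖x‖ = 1 ∧ r = J (x, -x)} := by
  let _ : CStarAlgebra M := { }
  let _ := CStarAlgebra.spectralOrder M
  have := CStarAlgebra.spectralOrderedRing M
  obtain ⟨hJ_nonneg, -, hJ_smul, -, -⟩ := id hJ
  have h_antidiag : ∀ z : M, ‖z‖ ≤ 1 →
      J (z, -z) ≤ sSup {r | ∃ x : M, ‖x‖ = 1 ∧ r = J (x, -x)} :=
    fun z => le_sSup_of_norm_le_one (𝕜 := ℂ) (fun _ => hJ_nonneg _)
      (fun c x => by rw [← hJ_smul, Prod.smul_mk, smul_neg]) (bddAbove_setOf_apply_neg h₁ h₂ hJ)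
  refine (distqGH_le_of_mem_admissible hJ).trans <| seminormHausdorffDist_image_le
    (matLift_nonneg hJ_nonneg) ((hJ_nonneg _).trans (h_antidiag 0 (by simp))) fun a ha => ?_
  refine matLift_le fun i j => ?_
  rw [embL_sub_embR_apply]
  exact h_antidiag _ (norm_apply_le_one_of_mem_posUnitBall ha i j)
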